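/- Let {X_n : n ∈ (ℤ₊)^d} satisfy condition (MD) with dominating variable X, 1 < p < 2, 1 ≤ r ≤ p and E|X|^p < ∞. Writing M = (m,…,m) and N = (n,…,n), and S_M(t) = ∑_{k ⪯ M} e^{i k·t} X_k, for every ε > 0 and almost all t ∈ [-π,π)^d, ∑_{n=1}^∞ n^{d(p/r - 1) - 1} P( max_{1 ≤ m ≤ n} |S_M(t)| > ε n^{d/r} ) < ∞. -/

import Mathlib

open MeasureTheory ENNReal

/-- `pidx n = n₁ ⋯ n_d` for `n ∈ (ℤ₊)^d`. -/
def pidx {d : ℕ} (n : Fin d → ℕ+) : ℕ := ∏ i, (n i : ℕ)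

/-- Discrete Fourier transform `S_n(t) = ∑_{k ⪯ n} e^{i k⋅t} X_k`. -/
noncomputable def dft {Ω : Type*} {d : ℕ} (X : (Fin d → ℕ+) → Ω → ℝ)
    (n : Fin d → ℕ+) (t : Fin d → ℝ) (ω : Ω) : ℂ :=
  ∑ k ∈ Finset.Icc 1 n,
    Complex.exp (Complex.I * ((∑ i, ((k i : ℕ) : ℝ) * t i : ℝ) : ℂ)) * (X k ω : ℂ)

lemma tail_measurable {Ω : Type*} [MeasurableSpace Ω] (P : Measure Ω) (W : Ω → ℝ) :
    Measurable fun v : ℝ => P {ω | v < |W ω|} := by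
  apply Antitone.measurable
  intro a b hab
  exact measure_mono fun ω h => lt_of_le_of_lt hab h

lemma tail_sum {γ : ℝ} (hγ : γ < 0) (m : ℕ+) :
    ∑' n : ℕ+, (if m ≤ n then ENNReal.ofReal ((n : ℝ) ^ (γ - 1)) else 0)
      ≤ ENNReal.ofReal (1 + 1 / (-γ)) * ENNReal.ofReal ((m : ℝ) ^ γ) := by
  classical
  set A : ℕ+ → Set ℝ := fun n => if m + 1 ≤ n then Set.Ioc ((n : ℝ) - 1) (n : ℝ) else ∅ with hA
  have hmeas : ∀ n, MeasurableSet (A n) := by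
    intro n; simp only [hA]; split_ifs <;> simp
  have hdisj : Pairwise (Function.onFun Disjoint A) := by
    intro i j hij
    simp only [Function.onFun, hA]
    split_ifs with h1 h2 h2
    · rw [Set.disjoint_left]
      rintro u ⟨hu1, hu2⟩ ⟨hv1, hv2⟩
      rcases hij.lt_or_gt with h | h
      · have : (i : ℝ) + 1 ≤ (j : ℝ) := by exact_mod_cast h
        linarith
      · have : (j : ℝ) + 1 ≤ (i : ℝ) := by exact_mod_cast h
        linarith
    all_goals simp
  have hterm : ∀ n : ℕ+, (if m ≤ n then ENNReal.ofReal ((n : ℝ) ^ (γ - 1)) else 0)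
      ≤ (if n = m then ENNReal.ofReal ((m : ℝ) ^ γ) else 0)
        + ∫⁻ u in A n, ENNReal.ofReal (u ^ (γ - 1)) := by
    intro n
    by_cases hnm : n = m
    · subst hnm
      simp only [le_refl, if_true]
      refine le_add_of_le_of_nonneg ?_ zero_le
      exact ENNReal.ofReal_le_ofReal
        (Real.rpow_le_rpow_of_exponent_le (by exact_mod_cast n.one_le) (by linarith))
    · by_cases hmn : m ≤ n
      · have hmn' : m + 1 ≤ n := by
          rcases lt_or_eq_of_le hmn with h | h
          · exact h
          · exact absurd h.symm hnm
        have hA' : A n = Set.Ioc ((n : ℝ) - 1) (n : ℝ) := by rw [hA]; simp [hmn']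
        simp only [hmn, if_true, hnm, if_false, zero_add, hA']
        have hvol : ENNReal.ofReal ((n : ℝ) ^ (γ - 1))
            = ∫⁻ _ in Set.Ioc ((n : ℝ) - 1) (n : ℝ), ENNReal.ofReal ((n : ℝ) ^ (γ - 1)) := by
          rw [setLIntegral_const, Real.volume_Ioc]
          simp
        rw [hvol]
        apply setLIntegral_mono (by fun_prop)
        intro u hu
        apply ENNReal.ofReal_le_ofReal
        have hm1 : (1:ℝ) ≤ (m:ℝ) := by exact_mod_cast m.one_le
        have hmn'' : (m:ℝ) + 1 ≤ (n:ℝ) := by exact_mod_cast hmn'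
        have hu0 : 0 < u := by
          have := hu.1
          linarith
        exact Real.rpow_le_rpow_of_nonpos hu0 hu.2 (by linarith)
      · simp [hmn]
  calc ∑' n : ℕ+, (if m ≤ n then ENNReal.ofReal ((n : ℝ) ^ (γ - 1)) else 0)
      ≤ ∑' n : ℕ+, ((if n = m then ENNReal.ofReal ((m : ℝ) ^ γ) else 0)
          + ∫⁻ u in A n, ENNReal.ofReal (u ^ (γ - 1))) := Summable.tsum_le_tsum hterm ENNReal.summable ENNReal.summable
    _ = ENNReal.ofReal ((m : ℝ) ^ γ) + ∑' n : ℕ+, ∫⁻ u in A n, ENNReal.ofReal (u ^ (γ - 1)) := by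
        rw [ENNReal.tsum_add, tsum_ite_eq]
    _ ≤ ENNReal.ofReal ((m : ℝ) ^ γ) + ∫⁻ u in Set.Ioi (m : ℝ), ENNReal.ofReal (u ^ (γ - 1)) := by
        gcongr
        rw [← lintegral_iUnion hmeas hdisj]
        apply lintegral_mono_set
        intro u hu
        simp only [Set.mem_iUnion] at hu
        obtain ⟨n, hn⟩ := hu
        rw [hA] at hn
        by_cases h : m + 1 ≤ n
        · simp only [h, if_true] at hn
          have : ((m : ℕ+) : ℝ) + 1 ≤ (n : ℝ) := by exact_mod_cast h
          exact Set.mem_Ioi.2 (by linarith [hn.1])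
        · simp [h] at hn
    _ ≤ ENNReal.ofReal ((m : ℝ) ^ γ) + ENNReal.ofReal ((m : ℝ) ^ γ * (1 / (-γ))) := by
        gcongr
        have hm0 : (0 : ℝ) < (m : ℝ) := by exact_mod_cast m.pos
        have hint : IntegrableOn (fun u : ℝ => u ^ (γ - 1)) (Set.Ioi (m : ℝ)) :=
          integrableOn_Ioi_rpow_of_lt (by linarith) hm0
        rw [← ofReal_integral_eq_lintegral_ofReal hint ?_]
        · apply ENNReal.ofReal_le_ofReal
          rw [integral_Ioi_rpow_of_lt (by linarith) hm0]
          rw [sub_add_cancel]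
          rw [div_eq_mul_inv, mul_one_div]
          rw [div_eq_mul_inv]
          ring_nf
          exact le_of_eq (by ring)
        · filter_upwards [ae_restrict_mem measurableSet_Ioi] with u hu
          exact Real.rpow_nonneg (by linarith [Set.mem_Ioi.1 hu]) _
    _ = ENNReal.ofReal (1 + 1 / (-γ)) * ENNReal.ofReal ((m : ℝ) ^ γ) := by
        have hng : (0:ℝ) ≤ 1 / (-γ) := div_nonneg zero_le_one (by linarith)
        have hmg : (0:ℝ) ≤ (m:ℝ) ^ γ := Real.rpow_nonneg (by positivity) _
        rw [← ENNReal.ofReal_add hmg (mul_nonneg hmg hng), ← ENNReal.ofReal_mul (by linarith)]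
        congr 1
        ring

lemma interval_bound {Ω : Type*} [MeasurableSpace Ω] (P : Measure Ω) (Y : Ω → ℝ) {p a b : ℝ}
    (hp : 0 < p) (ha : 0 ≤ a) (hab : a ≤ b) :
    P {ω | b < |Y ω|} * ENNReal.ofReal ((b ^ p - a ^ p) / p)
      ≤ ∫⁻ v in Set.Ioc a b, P {ω | v < |Y ω|} * ENNReal.ofReal (v ^ (p - 1)) := by
  have hint : IntegrableOn (fun v : ℝ => v ^ (p - 1)) (Set.Ioc a b) := by
    exact (intervalIntegral.intervalIntegrable_rpow' (a := a) (b := b)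
      (r := p - 1) (by linarith)).1
  have hval : ∫⁻ v in Set.Ioc a b, ENNReal.ofReal (v ^ (p - 1))
      = ENNReal.ofReal ((b ^ p - a ^ p) / p) := by
    rw [← ofReal_integral_eq_lintegral_ofReal hint ?_]
    · congr 1
      rw [← intervalIntegral.integral_of_le hab,
        integral_rpow (Or.inl (by linarith : (-1:ℝ) < p - 1))]
      rw [sub_add_cancel]
    · filter_upwards [ae_restrict_mem measurableSet_Ioc] with v hv
      exact Real.rpow_nonneg (le_trans ha hv.1.le) _
  calc P {ω | b < |Y ω|} * ENNReal.ofReal ((b ^ p - a ^ p) / p)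
      = ∫⁻ v in Set.Ioc a b, P {ω | b < |Y ω|} * ENNReal.ofReal (v ^ (p - 1)) := by
        rw [lintegral_const_mul _ (by fun_prop), hval]
    _ ≤ ∫⁻ v in Set.Ioc a b, P {ω | v < |Y ω|} * ENNReal.ofReal (v ^ (p - 1)) := by
        apply setLIntegral_mono ((tail_measurable P Y).mul (by fun_prop))
        intro v hv
        exact mul_le_mul_left (measure_mono fun ω h => lt_of_le_of_lt hv.2 h) _

lemma sq_layercake {Ω : Type*} [MeasurableSpace Ω] (P : Measure Ω) (Z : Ω → ℝ)
    (hZ : Measurable Z) :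
    ∫⁻ ω, ENNReal.ofReal (Z ω ^ 2) ∂P
      = 2 * ∫⁻ v in Set.Ioi (0:ℝ), P {ω | v < |Z ω|} * ENNReal.ofReal v := by
  have key := lintegral_comp_eq_lintegral_meas_lt_mul P (f := fun ω => |Z ω|)
    (g := fun t => 2 * t) (Filter.Eventually.of_forall fun ω => abs_nonneg _)
    (hZ.abs.aemeasurable)
    (fun t ht => (continuous_const.mul continuous_id).intervalIntegrable 0 t)
    (by filter_upwards [ae_restrict_mem measurableSet_Ioi] with t ht; linarith [Set.mem_Ioi.1 ht])
  have h1 : ∀ ω, (∫ t in (0:ℝ)..|Z ω|, 2 * t) = Z ω ^ 2 := by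
    intro ω
    rw [intervalIntegral.integral_const_mul, integral_id, sq_abs]
    ring
  simp_rw [h1] at key
  rw [key, ← lintegral_const_mul' 2 _ (by norm_num)]
  apply lintegral_congr
  intro v
  rw [ENNReal.ofReal_mul (by norm_num)]
  have h2 : ENNReal.ofReal (2:ℝ) = 2 := by norm_num
  rw [h2]
  ring

lemma I_lt_top {Ω : Type*} [MeasurableSpace Ω] (P : Measure Ω) (Y : Ω → ℝ)
    (hY : Measurable Y) {p : ℝ} (hp : 1 < p)
    (hmom : ∫⁻ ω, ENNReal.ofReal (|Y ω| ^ p) ∂P < ∞) :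
    ∫⁻ v in Set.Ioi (0:ℝ), P {ω | v < |Y ω|} * ENNReal.ofReal (v ^ (p - 1)) < ∞ := by
  have key := lintegral_comp_eq_lintegral_meas_lt_mul P (f := fun ω => |Y ω|)
    (g := fun t => p * t ^ (p - 1)) (Filter.Eventually.of_forall fun ω => abs_nonneg _)
    (hY.abs.aemeasurable)
    (fun t ht => ((intervalIntegral.intervalIntegrable_rpow' (by linarith)).const_mul p))
    (by
      filter_upwards [ae_restrict_mem measurableSet_Ioi] with t ht
      have : (0:ℝ) < t := ht
      positivity)
  have h1 : ∀ ω, (∫ t in (0:ℝ)..|Y ω|, p * t ^ (p - 1)) = |Y ω| ^ p := by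
    intro ω
    rw [intervalIntegral.integral_const_mul,
      integral_rpow (Or.inl (by linarith : (-1:ℝ) < p - 1)), sub_add_cancel,
      Real.zero_rpow (by linarith)]
    field_simp
    simp
  simp_rw [h1] at key
  have h2 : ∫⁻ v in Set.Ioi (0:ℝ), P {ω | v < |Y ω|} * ENNReal.ofReal (p * v ^ (p - 1))
      = ENNReal.ofReal p * ∫⁻ v in Set.Ioi (0:ℝ), P {ω | v < |Y ω|} * ENNReal.ofReal (v ^ (p - 1)) := by
    rw [← lintegral_const_mul' _ _ ENNReal.ofReal_ne_top]
    apply lintegral_congr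
    intro v
    rw [ENNReal.ofReal_mul (by linarith)]
    ring
  rw [key, h2] at hmom
  by_contra hcon
  rw [not_lt, top_le_iff] at hcon
  rw [hcon, ENNReal.mul_top (by simp [ENNReal.ofReal_eq_zero]; linarith)] at hmom
  exact (lt_irrefl _ hmom)

lemma S1_bound {Ω : Type*} [MeasurableSpace Ω] (P : Measure Ω) (Y : Ω → ℝ)
    {β p : ℝ} (hβ : 0 < β) (hp : 1 < p) (hα : 1 ≤ β * p) :
    ∑' n : ℕ+, ENNReal.ofReal ((n : ℝ) ^ (β * p - 1)) * P {ω | (n : ℝ) ^ β < |Y ω|}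
      ≤ ENNReal.ofReal p *
        ∫⁻ v in Set.Ioi (0:ℝ), P {ω | v < |Y ω|} * ENNReal.ofReal (v ^ (p - 1)) := by
  classical
  set g : ℝ → ℝ≥0∞ := fun v => P {ω | v < |Y ω|} * ENNReal.ofReal (v ^ (p - 1)) with hg
  set A : ℕ+ → Set ℝ := fun n => Set.Ioc (((n : ℝ) - 1) ^ β) ((n : ℝ) ^ β) with hA
  have hmeas : ∀ n, MeasurableSet (A n) := fun n => measurableSet_Ioc
  have hone : ∀ n : ℕ+, (1:ℝ) ≤ (n:ℝ) := fun n => by exact_mod_cast n.one_le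
  have hdisj : Pairwise (Function.onFun Disjoint A) := by
    intro i j hij
    simp only [Function.onFun, hA]
    rw [Set.disjoint_left]
    rintro u ⟨hu1, hu2⟩ ⟨hv1, hv2⟩
    have key : ∀ a b : ℕ+, a < b → ((a:ℝ) ^ β ≤ ((b:ℝ) - 1) ^ β) := by
      intro a b hab
      apply Real.rpow_le_rpow (by linarith [hone a]) ?_ hβ.le
      have : (a:ℝ) + 1 ≤ (b:ℝ) := by exact_mod_cast hab
      linarith
    rcases hij.lt_or_gt with h | h
    · exact absurd hu2 (not_le.2 (lt_of_le_of_lt (key i j h) hv1))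
    · exact absurd hv2 (not_le.2 (lt_of_le_of_lt (key j i h) hu1))
  have hterm : ∀ n : ℕ+, ENNReal.ofReal ((n : ℝ) ^ (β * p - 1)) * P {ω | (n : ℝ) ^ β < |Y ω|}
      ≤ ENNReal.ofReal p * ∫⁻ v in A n, g v := by
    intro n
    have h1n := hone n
    have hn0 : (0:ℝ) < (n:ℝ) := by linarith
    have hb0 : (0:ℝ) ≤ (n:ℝ) - 1 := by linarith
    -- key numeric inequality
    have hkey : (n:ℝ) ^ (β * p - 1) ≤ (n:ℝ) ^ (β * p) - ((n:ℝ) - 1) ^ (β * p) := by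
      have hnp : (n:ℝ) ^ (β * p) = (n:ℝ) * (n:ℝ) ^ (β * p - 1) := by
        nth_rewrite 1 [show β * p = 1 + (β * p - 1) by ring]
        rw [Real.rpow_add hn0, Real.rpow_one]
      rcases eq_or_lt_of_le hb0 with h0 | h0
      · have hn1 : (n:ℝ) = 1 := by linarith
        rw [← h0, Real.zero_rpow (by positivity : (0:ℝ) < β * p).ne', hn1]
        simp [Real.one_rpow]
      · have hsplit : ((n:ℝ) - 1) ^ (β * p) = ((n:ℝ) - 1) * ((n:ℝ) - 1) ^ (β * p - 1) := by
          nth_rewrite 1 [show β * p = 1 + (β * p - 1) by ring]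
          rw [Real.rpow_add h0, Real.rpow_one]
        have hmono : ((n:ℝ) - 1) ^ (β * p - 1) ≤ (n:ℝ) ^ (β * p - 1) :=
          Real.rpow_le_rpow hb0 (by linarith) (by nlinarith)
        have hnn : (0:ℝ) ≤ ((n:ℝ) - 1) ^ (β * p - 1) := Real.rpow_nonneg hb0 _
        rw [hnp, hsplit]
        nlinarith [mul_le_mul_of_nonneg_left hmono (by linarith : (0:ℝ) ≤ (n:ℝ) - 1)]
    calc ENNReal.ofReal ((n : ℝ) ^ (β * p - 1)) * P {ω | (n : ℝ) ^ β < |Y ω|}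
        ≤ ENNReal.ofReal ((n:ℝ) ^ (β * p) - ((n:ℝ) - 1) ^ (β * p)) * P {ω | (n : ℝ) ^ β < |Y ω|} := by
          exact mul_le_mul_left (ENNReal.ofReal_le_ofReal hkey) _
      _ = ENNReal.ofReal p * (P {ω | (n : ℝ) ^ β < |Y ω|} *
            ENNReal.ofReal ((((n:ℝ) ^ β) ^ p - (((n:ℝ) - 1) ^ β) ^ p) / p)) := by
          have e1 : ((n:ℝ) ^ β) ^ p = (n:ℝ) ^ (β * p) := (Real.rpow_mul hn0.le β p).symm
          have e2 : (((n:ℝ) - 1) ^ β) ^ p = ((n:ℝ) - 1) ^ (β * p) := (Real.rpow_mul hb0 β p).symm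
          have e3 : ENNReal.ofReal p *
              ENNReal.ofReal (((n:ℝ) ^ (β * p) - ((n:ℝ) - 1) ^ (β * p)) / p)
              = ENNReal.ofReal ((n:ℝ) ^ (β * p) - ((n:ℝ) - 1) ^ (β * p)) := by
            rw [← ENNReal.ofReal_mul (by linarith : (0:ℝ) ≤ p)]
            congr 1
            field_simp
          rw [e1, e2, ← e3]
          ring
      _ ≤ ENNReal.ofReal p * ∫⁻ v in A n, g v := by
          gcongr
          exact interval_bound P Y (by linarith) (Real.rpow_nonneg hb0 _)
            (Real.rpow_le_rpow hb0 (by linarith) hβ.le)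
  calc ∑' n : ℕ+, ENNReal.ofReal ((n : ℝ) ^ (β * p - 1)) * P {ω | (n : ℝ) ^ β < |Y ω|}
      ≤ ∑' n : ℕ+, ENNReal.ofReal p * ∫⁻ v in A n, g v :=
        Summable.tsum_le_tsum hterm ENNReal.summable ENNReal.summable
    _ = ENNReal.ofReal p * ∑' n : ℕ+, ∫⁻ v in A n, g v := ENNReal.tsum_mul_left
    _ = ENNReal.ofReal p * ∫⁻ v in ⋃ n, A n, g v := by rw [lintegral_iUnion hmeas hdisj]
    _ ≤ ENNReal.ofReal p * ∫⁻ v in Set.Ioi (0:ℝ), g v := by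
        gcongr
        rintro u hu
        simp only [Set.mem_iUnion] at hu
        obtain ⟨n, hn⟩ := hu
        have : (0:ℝ) ≤ (((n:ℝ)) - 1) ^ β := Real.rpow_nonneg (by linarith [hone n]) _
        exact Set.mem_Ioi.2 (lt_of_le_of_lt this hn.1)

lemma restrict_Ioc_eq {b : ℝ} (f : ℝ → ℝ≥0∞) :
    ∫⁻ v in Set.Ioi (0:ℝ), (Set.Ioc (0:ℝ) b).indicator f v = ∫⁻ v in Set.Ioc (0:ℝ) b, f v := by
  rw [lintegral_indicator measurableSet_Ioc, Measure.restrict_restrict measurableSet_Ioc,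
    Set.inter_eq_left.2 Set.Ioc_subset_Ioi_self]

lemma S2_bound {Ω : Type*} [MeasurableSpace Ω] (P : Measure Ω) (Y : Ω → ℝ)
    {β p : ℝ} (hβ : 0 < β) (hp1 : 1 < p) (hp2 : p < 2) :
    ∑' n : ℕ+, ENNReal.ofReal ((n : ℝ) ^ (β * (p - 2) - 1)) *
        ∫⁻ v in Set.Ioc (0:ℝ) ((n : ℝ) ^ β), P {ω | v < |Y ω|} * ENNReal.ofReal v
      ≤ ENNReal.ofReal (1 + 1 / (-(β * (p - 2)))) *
        ∫⁻ v in Set.Ioi (0:ℝ), P {ω | v < |Y ω|} * ENNReal.ofReal (v ^ (p - 1)) := by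
  classical
  set γ : ℝ := β * (p - 2) with hγdef
  have hγ : γ < 0 := by
    have : p - 2 < 0 := by linarith
    exact mul_neg_of_pos_of_neg hβ this
  set h : ℝ → ℝ≥0∞ := fun v => P {ω | v < |Y ω|} * ENNReal.ofReal v with hh
  have hmeas_h : Measurable h := (tail_measurable P Y).mul (by fun_prop)
  -- rewrite each summand as integral over Ioi 0 of indicator
  have step1 : ∀ n : ℕ+, ENNReal.ofReal ((n : ℝ) ^ (γ - 1)) *
      ∫⁻ v in Set.Ioc (0:ℝ) ((n : ℝ) ^ β), h v
      = ∫⁻ v in Set.Ioi (0:ℝ),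
          (Set.Ioc (0:ℝ) ((n : ℝ) ^ β)).indicator
            (fun v => ENNReal.ofReal ((n : ℝ) ^ (γ - 1)) * h v) v := by
    intro n
    rw [restrict_Ioc_eq, lintegral_const_mul' _ _ ENNReal.ofReal_ne_top]
  calc ∑' n : ℕ+, ENNReal.ofReal ((n : ℝ) ^ (γ - 1)) * ∫⁻ v in Set.Ioc (0:ℝ) ((n : ℝ) ^ β), h v
      = ∫⁻ v in Set.Ioi (0:ℝ), ∑' n : ℕ+,
          (Set.Ioc (0:ℝ) ((n : ℝ) ^ β)).indicator
            (fun v => ENNReal.ofReal ((n : ℝ) ^ (γ - 1)) * h v) v := by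
        simp_rw [step1]
        rw [← lintegral_tsum]
        intro n
        exact ((hmeas_h.const_mul _).indicator measurableSet_Ioc).aemeasurable
    _ ≤ ∫⁻ v in Set.Ioi (0:ℝ), ENNReal.ofReal (1 + 1 / (-γ)) *
          (P {ω | v < |Y ω|} * ENNReal.ofReal (v ^ (p - 1))) := by
        apply setLIntegral_mono (((tail_measurable P Y).mul (by fun_prop)).const_mul _)
        intro v hv
        have hv0 : (0:ℝ) < v := hv
        -- choose m₀
        set m₀ : ℕ+ := ⟨max 1 ⌈v ^ (1/β)⌉₊, lt_of_lt_of_le zero_lt_one (le_max_left _ _)⟩ with hm₀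
        have hm₀v : v ^ (1/β) ≤ (m₀ : ℝ) := by
          have h1 : (⌈v ^ (1/β)⌉₊ : ℝ) ≤ ((m₀ : ℕ) : ℝ) := by
            exact_mod_cast Nat.cast_le.2 (le_max_right _ _)
          exact le_trans (Nat.le_ceil _) h1
        have hkey : ∀ n : ℕ+, (Set.Ioc (0:ℝ) ((n : ℝ) ^ β)).indicator
              (fun v => ENNReal.ofReal ((n : ℝ) ^ (γ - 1)) * h v) v
            ≤ (if m₀ ≤ n then ENNReal.ofReal ((n : ℝ) ^ (γ - 1)) else 0) * h v := by
          intro n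
          rw [Set.indicator_apply]
          by_cases hmem : v ∈ Set.Ioc (0:ℝ) ((n : ℝ) ^ β)
          · have hn : m₀ ≤ n := by
              have hvn : v ≤ (n : ℝ) ^ β := hmem.2
              have h2 : v ^ (1/β) ≤ ((n : ℝ) ^ β) ^ (1/β) :=
                Real.rpow_le_rpow hv0.le hvn (by positivity)
              have h3 : ((n : ℝ) ^ β) ^ (1/β) = (n : ℝ) := by
                rw [← Real.rpow_mul (by positivity), mul_one_div, div_self hβ.ne', Real.rpow_one]
              rw [h3] at h2
              have h4 : ⌈v ^ (1/β)⌉₊ ≤ (n : ℕ) := Nat.ceil_le.2 (by exact_mod_cast h2)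
              have h5 : max 1 ⌈v ^ (1/β)⌉₊ ≤ (n : ℕ) := max_le n.one_le h4
              exact_mod_cast h5
            simp [hmem, hn]
          · simp [hmem]
        calc ∑' n : ℕ+, (Set.Ioc (0:ℝ) ((n : ℝ) ^ β)).indicator
              (fun v => ENNReal.ofReal ((n : ℝ) ^ (γ - 1)) * h v) v
            ≤ ∑' n : ℕ+, (if m₀ ≤ n then ENNReal.ofReal ((n : ℝ) ^ (γ - 1)) else 0) * h v :=
              Summable.tsum_le_tsum hkey ENNReal.summable ENNReal.summable
          _ = (∑' n : ℕ+, if m₀ ≤ n then ENNReal.ofReal ((n : ℝ) ^ (γ - 1)) else 0) * h v :=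
              ENNReal.tsum_mul_right
          _ ≤ ENNReal.ofReal (1 + 1 / (-γ)) * ENNReal.ofReal ((m₀ : ℝ) ^ γ) * h v :=
              mul_le_mul_left (tail_sum hγ m₀) _
          _ ≤ ENNReal.ofReal (1 + 1 / (-γ)) *
                (P {ω | v < |Y ω|} * ENNReal.ofReal (v ^ (p - 1))) := by
              rw [mul_assoc]
              apply mul_le_mul_right
              rw [hh]
              have hgoal : ENNReal.ofReal ((m₀ : ℝ) ^ γ) * (P {ω | v < |Y ω|} * ENNReal.ofReal v)
                  = P {ω | v < |Y ω|} * (ENNReal.ofReal ((m₀ : ℝ) ^ γ) * ENNReal.ofReal v) := by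
                ring
              rw [hgoal]
              apply mul_le_mul_right
              rw [← ENNReal.ofReal_mul (Real.rpow_nonneg (by positivity) _)]
              apply ENNReal.ofReal_le_ofReal
              have hm0pos : (0:ℝ) < (m₀ : ℝ) := by exact_mod_cast m₀.pos
              have hvb : (0:ℝ) < v ^ (1/β) := Real.rpow_pos_of_pos hv0 _
              have h6 : ((m₀ : ℝ)) ^ γ ≤ (v ^ (1/β)) ^ γ :=
                Real.rpow_le_rpow_of_nonpos hvb hm₀v hγ.le
              have h7 : (v ^ (1/β)) ^ γ = v ^ ((1/β) * γ) := (Real.rpow_mul hv0.le _ _).symm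
              calc (m₀ : ℝ) ^ γ * v ≤ (v ^ (1/β)) ^ γ * v := by
                    apply mul_le_mul_of_nonneg_right h6 hv0.le
                _ = v ^ ((1/β) * γ) * v ^ (1:ℝ) := by rw [h7, Real.rpow_one]
                _ = v ^ ((1/β) * γ + 1) := (Real.rpow_add hv0 _ _).symm
                _ = v ^ (p - 1) := by
                    congr 1
                    rw [hγdef]
                    field_simp
                    ring
    _ = ENNReal.ofReal (1 + 1 / (-γ)) *
          ∫⁻ v in Set.Ioi (0:ℝ), P {ω | v < |Y ω|} * ENNReal.ofReal (v ^ (p - 1)) := by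
        rw [lintegral_const_mul' _ _ ENNReal.ofReal_ne_top]

lemma dft_meas_omega {Ω : Type*} [MeasurableSpace Ω] {d : ℕ} (X : (Fin d → ℕ+) → Ω → ℝ)
    (hX : ∀ k, Measurable (X k)) (n : Fin d → ℕ+) (t : Fin d → ℝ) :
    Measurable fun ω => dft X n t ω := by
  unfold dft
  apply Finset.measurable_sum
  intro k _
  exact (Complex.measurable_ofReal.comp (hX k)).const_mul _

lemma dft_meas_prod {Ω : Type*} [MeasurableSpace Ω] {d : ℕ} (X : (Fin d → ℕ+) → Ω → ℝ)
    (hX : ∀ k, Measurable (X k)) (n : Fin d → ℕ+) :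
    Measurable fun q : (Fin d → ℝ) × Ω => dft X n q.1 q.2 := by
  unfold dft
  apply Finset.measurable_sum
  intro k _
  apply Measurable.mul
  · have hc : Continuous fun t : Fin d → ℝ =>
        Complex.exp (Complex.I * ((∑ i, ((k i : ℕ) : ℝ) * t i : ℝ) : ℂ)) := by
      apply Complex.continuous_exp.comp
      apply continuous_const.mul
      apply Complex.continuous_ofReal.comp
      exact continuous_finset_sum _ fun i _ => continuous_const.mul (continuous_apply i)
    exact hc.measurable.comp measurable_fst
  · exact Complex.measurable_ofReal.comp ((hX k).comp measurable_snd)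

lemma event_measurable {Ω : Type*} [MeasurableSpace Ω] (P : Measure Ω) [SFinite P] {d : ℕ}
    (X : (Fin d → ℕ+) → Ω → ℝ) (hX : ∀ k, Measurable (X k)) (n : ℕ+) (c : ℝ) :
    Measurable fun t : Fin d → ℝ =>
      P {ω | ∃ m : ℕ+, m ≤ n ∧ c < ‖dft X (fun _ : Fin d => m) t ω‖} := by
  have hS : MeasurableSet {q : (Fin d → ℝ) × Ω |
      ∃ m : ℕ+, m ≤ n ∧ c < ‖dft X (fun _ : Fin d => m) q.1 q.2‖} := by
    have heq : {q : (Fin d → ℝ) × Ω |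
        ∃ m : ℕ+, m ≤ n ∧ c < ‖dft X (fun _ : Fin d => m) q.1 q.2‖}
        = ⋃ m : ℕ+, ⋃ (_ : m ≤ n),
          {q : (Fin d → ℝ) × Ω | c < ‖dft X (fun _ : Fin d => m) q.1 q.2‖} := by
      ext q; simp [Set.mem_iUnion]
    rw [heq]
    refine MeasurableSet.iUnion fun m => MeasurableSet.iUnion fun _ => ?_
    exact measurableSet_lt measurable_const
      (continuous_norm.measurable.comp (dft_meas_prod X hX _))
  exact measurable_measure_prodMk_left hS

lemma trunc_sum_bound {Ω : Type*} [MeasurableSpace Ω] (P : Measure Ω) {d : ℕ}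
    (X : (Fin d → ℕ+) → Ω → ℝ) (Y : Ω → ℝ) (hX : ∀ k, Measurable (X k))
    (M₀ : ℝ) {b : ℝ} (hb : 0 ≤ b) (N : Fin d → ℕ+)
    (hMD : ∀ x : ℝ, 0 ≤ x →
      ∑ k ∈ Finset.Icc 1 N, P {ω : Ω | x < |X k ω|}
        ≤ (pidx N : ℝ≥0∞) * ENNReal.ofReal M₀ * P {ω : Ω | x < |Y ω|}) :
    ∑ k ∈ Finset.Icc 1 N,
        ∫⁻ ω, ENNReal.ofReal ((if |X k ω| ≤ b then X k ω else 0) ^ 2) ∂P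
      ≤ 2 * ((pidx N : ℝ≥0∞) * ENNReal.ofReal M₀ *
          ∫⁻ v in Set.Ioc (0:ℝ) b, P {ω | v < |Y ω|} * ENNReal.ofReal v) := by
  classical
  have hZmeas : ∀ k, Measurable fun ω => if |X k ω| ≤ b then X k ω else 0 := fun k =>
    Measurable.ite (measurableSet_le (hX k).abs measurable_const) (hX k) measurable_const
  have step1 : ∀ k, ∫⁻ ω, ENNReal.ofReal ((if |X k ω| ≤ b then X k ω else 0) ^ 2) ∂P
      ≤ 2 * ∫⁻ v in Set.Ioc (0:ℝ) b, P {ω | v < |X k ω|} * ENNReal.ofReal v := by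
    intro k
    rw [sq_layercake P _ (hZmeas k),
      ← restrict_Ioc_eq (fun v => P {ω | v < |X k ω|} * ENNReal.ofReal v)]
    apply mul_le_mul_right
    apply setLIntegral_mono (((tail_measurable P (X k)).mul (by fun_prop)).indicator
      measurableSet_Ioc)
    intro v hv
    have hv0 : (0:ℝ) < v := hv
    rw [Set.indicator_apply]
    by_cases hvb : v ∈ Set.Ioc (0:ℝ) b
    · simp only [hvb, if_true]
      apply mul_le_mul_left
      apply measure_mono
      intro ω hω
      simp only [Set.mem_setOf_eq] at hω ⊢
      by_cases h : |X k ω| ≤ b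
      · simpa [h] using hω
      · simp [h] at hω; linarith
    · have hbv : b < v := by
        simp only [Set.mem_Ioc, not_and, not_le] at hvb
        exact hvb hv0
      have : {ω | v < |(if |X k ω| ≤ b then X k ω else 0)|} = ∅ := by
        ext ω
        simp only [Set.mem_setOf_eq, Set.mem_empty_iff_false, iff_false, not_lt]
        by_cases h : |X k ω| ≤ b
        · simp [h]; linarith
        · simp [h]; linarith
      rw [this]
      simp
  calc ∑ k ∈ Finset.Icc 1 N,
        ∫⁻ ω, ENNReal.ofReal ((if |X k ω| ≤ b then X k ω else 0) ^ 2) ∂P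
      ≤ ∑ k ∈ Finset.Icc 1 N,
          2 * ∫⁻ v in Set.Ioc (0:ℝ) b, P {ω | v < |X k ω|} * ENNReal.ofReal v :=
        Finset.sum_le_sum fun k _ => step1 k
    _ = 2 * ∫⁻ v in Set.Ioc (0:ℝ) b,
          (∑ k ∈ Finset.Icc 1 N, P {ω | v < |X k ω|}) * ENNReal.ofReal v := by
        rw [← Finset.mul_sum, ← lintegral_finset_sum]
        · congr 1
          apply lintegral_congr
          intro v
          rw [Finset.sum_mul]
        · exact fun k _ => (tail_measurable P (X k)).mul (by fun_prop)
    _ ≤ 2 * ∫⁻ v in Set.Ioc (0:ℝ) b,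
          ((pidx N : ℝ≥0∞) * ENNReal.ofReal M₀ * P {ω | v < |Y ω|}) * ENNReal.ofReal v := by
        apply mul_le_mul_right
        apply setLIntegral_mono ((((tail_measurable P Y).const_mul _).mul (by fun_prop)))
        intro v hv
        exact mul_le_mul_left (hMD v hv.1.le) _
    _ = 2 * ((pidx N : ℝ≥0∞) * ENNReal.ofReal M₀ *
          ∫⁻ v in Set.Ioc (0:ℝ) b, P {ω | v < |Y ω|} * ENNReal.ofReal v) := by
        congr 1
        rw [← lintegral_const_mul' _ _ (ENNReal.mul_ne_top (ENNReal.natCast_ne_top _)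
          ENNReal.ofReal_ne_top)]
        apply lintegral_congr
        intro v
        ring

theorem stmt18 {Ω : Type*} [MeasurableSpace Ω] (P : Measure Ω) [IsProbabilityMeasure P]
    {d : ℕ} (hd : 1 ≤ d)
    (X : (Fin d → ℕ+) → Ω → ℝ) (Y : Ω → ℝ)
    (hX : ∀ k, Measurable (X k)) (hY : Measurable Y)
    (M₀ : ℝ) (hM₀ : 0 ≤ M₀)
    (hMD : ∀ x : ℝ, 0 ≤ x → ∀ n : Fin d → ℕ+,
      ∑ k ∈ Finset.Icc 1 n, P {ω : Ω | x < |X k ω|}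
        ≤ (pidx n : ℝ≥0∞) * ENNReal.ofReal M₀ * P {ω : Ω | x < |Y ω|})
    (p r : ℝ) (hp1 : 1 < p) (hp2 : p < 2) (hr1 : 1 ≤ r) (hrp : r ≤ p)
    (hmom : ∫⁻ ω, ENNReal.ofReal (|Y ω| ^ p) ∂P < ∞)
    -- Weisz's maximal inequality for cubic partial sums of trigonometric series,
    -- assumed for arbitrary (e.g. truncated) random coefficients:
    (hmax : ∃ C : ℝ≥0∞, C < ∞ ∧ ∀ (Z : (Fin d → ℕ+) → Ω → ℝ),
      (∀ k, Measurable (Z k)) → ∀ n : ℕ+,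
        (∫⁻ t, (∫⁻ ω, (⨆ m : {m : ℕ+ // m ≤ n}, ENNReal.ofReal
              (‖dft Z (fun _ : Fin d => (m : ℕ+)) t ω‖ ^ 2)) ∂P)
            ∂(Measure.pi fun _ : Fin d =>
              (volume : Measure ℝ).restrict (Set.Ico (-Real.pi) Real.pi)))
          ≤ C * ∑ k ∈ Finset.Icc 1 (fun _ : Fin d => n),
              ∫⁻ ω, ENNReal.ofReal (Z k ω ^ 2) ∂P) :
    ∀ ε : ℝ, 0 < ε →
      ∀ᵐ t ∂(Measure.pi fun _ : Fin d =>
          (volume : Measure ℝ).restrict (Set.Ico (-Real.pi) Real.pi)),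
        ∑' n : ℕ+,
          ENNReal.ofReal (((n : ℕ) : ℝ) ^ ((d : ℝ) * (p / r - 1) - 1)) *
            P {ω : Ω | ∃ m : ℕ+, m ≤ n ∧
              ε * ((n : ℕ) : ℝ) ^ ((d : ℝ) / r) <
                ‖dft X (fun _ : Fin d => m) t ω‖} < ∞ := by
  classical
  intro ε hε
  obtain ⟨C, hC, hmaxC⟩ := hmax
  set μbox : Measure (Fin d → ℝ) := Measure.pi fun _ : Fin d =>
    (volume : Measure ℝ).restrict (Set.Ico (-Real.pi) Real.pi) with hμbox
  set β : ℝ := (d : ℝ) / r with hβdef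
  set δ : ℝ := (d : ℝ) * (p / r - 1) - 1 with hδdef
  set γ : ℝ := β * (p - 2) with hγdef
  have hr0 : (0:ℝ) < r := lt_of_lt_of_le zero_lt_one hr1
  have hd0 : (0:ℝ) < (d:ℝ) := by exact_mod_cast lt_of_lt_of_le zero_lt_one hd
  have hβ : 0 < β := by rw [hβdef]; positivity
  have hIfin : (∫⁻ v in Set.Ioi (0:ℝ), P {ω | v < |Y ω|} * ENNReal.ofReal (v ^ (p - 1))) < ∞ :=
    I_lt_top P Y hY hp1 hmom
  set V : ℝ≥0∞ := μbox Set.univ with hV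
  have hVfin : V < ∞ := by
    rw [hV, hμbox, Measure.pi_univ]
    simp only [Measure.restrict_apply_univ, Real.volume_Ico]
    exact ENNReal.prod_lt_top fun i _ => ENNReal.ofReal_lt_top
  -- per-n bound
  set c1 : ℝ≥0∞ := C * 2 * (ENNReal.ofReal (ε^2))⁻¹ * ENNReal.ofReal M₀ with hc1
  set c2 : ℝ≥0∞ := ENNReal.ofReal M₀ * V with hc2
  have key : ∀ n : ℕ+,
      ENNReal.ofReal (((n : ℕ) : ℝ) ^ δ) *
        ∫⁻ t, P {ω : Ω | ∃ m : ℕ+, m ≤ n ∧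
          ε * ((n : ℕ) : ℝ) ^ β < ‖dft X (fun _ : Fin d => m) t ω‖} ∂μbox
      ≤ c1 * (ENNReal.ofReal (((n : ℕ) : ℝ) ^ (γ - 1)) *
            ∫⁻ v in Set.Ioc (0:ℝ) (((n : ℕ) : ℝ) ^ β), P {ω | v < |Y ω|} * ENNReal.ofReal v)
        + c2 * (ENNReal.ofReal (((n : ℕ) : ℝ) ^ (β * p - 1)) * P {ω | ((n : ℕ) : ℝ) ^ β < |Y ω|}) := by
    intro n
    set nr : ℝ := ((n : ℕ) : ℝ) with hnr
    have hnr1 : (1:ℝ) ≤ nr := by rw [hnr]; exact_mod_cast n.one_le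
    have hnr0 : (0:ℝ) < nr := by linarith
    set b : ℝ := nr ^ β with hb
    have hb0 : 0 < b := Real.rpow_pos_of_pos hnr0 _
    set N : Fin d → ℕ+ := fun _ => n with hN
    set Z : (Fin d → ℕ+) → Ω → ℝ := fun k ω => if |X k ω| ≤ b then X k ω else 0 with hZdef
    have hZ : ∀ k, Measurable (Z k) := fun k =>
      Measurable.ite (measurableSet_le (hX k).abs measurable_const) (hX k) measurable_const
    set G : (Fin d → ℝ) → Ω → ℝ≥0∞ := fun t ω => ⨆ m : {m : ℕ+ // m ≤ n},
      ENNReal.ofReal (‖dft Z (fun _ : Fin d => (m : ℕ+)) t ω‖ ^ 2) with hG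
    set cc : ℝ≥0∞ := ENNReal.ofReal ((ε * b)^2) with hcc
    have hcc0 : cc ≠ 0 := by
      rw [hcc]
      simp only [ne_eq, ENNReal.ofReal_eq_zero, not_le]
      positivity
    have hcctop : cc ≠ ∞ := ENNReal.ofReal_ne_top
    set SA : Set Ω := {ω | ∃ k ∈ Finset.Icc 1 N, b < |X k ω|} with hSA
    -- inclusion
    have h_incl : ∀ t : Fin d → ℝ,
        {ω : Ω | ∃ m : ℕ+, m ≤ n ∧ ε * nr ^ β < ‖dft X (fun _ : Fin d => m) t ω‖}
          ⊆ SA ∪ {ω | cc ≤ G t ω} := by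
      intro t ω hω
      obtain ⟨m, hm, hlt⟩ := hω
      by_cases hA : ω ∈ SA
      · exact Or.inl hA
      · refine Or.inr ?_
        rw [hSA, Set.mem_setOf_eq] at hA
        push_neg at hA
        have hdfteq : dft Z (fun _ : Fin d => m) t ω = dft X (fun _ : Fin d => m) t ω := by
          unfold dft
          apply Finset.sum_congr rfl
          intro k hk
          congr 2
          have hkN : k ∈ Finset.Icc 1 N := by
            rw [Finset.mem_Icc] at hk ⊢
            exact ⟨hk.1, le_trans hk.2 fun i => hm⟩
          have hXb : |X k ω| ≤ b := hA k hkN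
          simp [hZdef, hXb]
        rw [Set.mem_setOf_eq, hG]
        have h1 : cc ≤ ENNReal.ofReal
            (‖dft Z (fun _ : Fin d => m) t ω‖ ^ 2) := by
          rw [hcc, hdfteq]
          apply ENNReal.ofReal_le_ofReal
          apply pow_le_pow_left₀ (by positivity) hlt.le
        exact le_trans h1 (le_iSup (fun m' : {m' : ℕ+ // m' ≤ n} =>
          ENNReal.ofReal (‖dft Z (fun _ : Fin d => (m' : ℕ+)) t ω‖ ^ 2)) ⟨m, hm⟩)
    -- Markov
    have hGmeas : ∀ t, Measurable (G t) := fun t =>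
      Measurable.iSup fun m => ((continuous_norm.measurable.comp
        (dft_meas_omega Z hZ _ t)).pow_const 2).ennreal_ofReal
    have hmark : ∀ t, P {ω | cc ≤ G t ω} ≤ cc⁻¹ * ∫⁻ ω, G t ω ∂P := by
      intro t
      have h1 := mul_meas_ge_le_lintegral₀ (μ := P) (hGmeas t).aemeasurable cc
      calc P {ω | cc ≤ G t ω} = cc⁻¹ * (cc * P {ω | cc ≤ G t ω}) := by
            rw [← mul_assoc, ENNReal.inv_mul_cancel hcc0 hcctop, one_mul]
        _ ≤ cc⁻¹ * ∫⁻ ω, G t ω ∂P := mul_le_mul_right h1 _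
    have hPA : P SA ≤ (pidx N : ℝ≥0∞) * ENNReal.ofReal M₀ * P {ω | b < |Y ω|} := by
      have hset : SA = ⋃ k ∈ Finset.Icc 1 N, {ω | b < |X k ω|} := by
        ext ω; simp [hSA]
      rw [hset]
      exact le_trans (measure_biUnion_finset_le _ _) (hMD b hb0.le N)
    -- the integrated bound
    have hint : ∫⁻ t, P {ω : Ω | ∃ m : ℕ+, m ≤ n ∧
          ε * nr ^ β < ‖dft X (fun _ : Fin d => m) t ω‖} ∂μbox
        ≤ cc⁻¹ * (C * (2 * ((pidx N : ℝ≥0∞) * ENNReal.ofReal M₀ *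
            ∫⁻ v in Set.Ioc (0:ℝ) b, P {ω | v < |Y ω|} * ENNReal.ofReal v)))
          + ((pidx N : ℝ≥0∞) * ENNReal.ofReal M₀ * P {ω | b < |Y ω|}) * V := by
      calc ∫⁻ t, P {ω : Ω | ∃ m : ℕ+, m ≤ n ∧
            ε * nr ^ β < ‖dft X (fun _ : Fin d => m) t ω‖} ∂μbox
          ≤ ∫⁻ t, (P {ω | cc ≤ G t ω} + P SA) ∂μbox := by
            apply lintegral_mono
            intro t
            refine le_trans (measure_mono (h_incl t)) ?_
            rw [Set.union_comm]
            exact measure_union_le _ _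
        _ = (∫⁻ t, P {ω | cc ≤ G t ω} ∂μbox) + P SA * V := by
            rw [lintegral_add_right _ measurable_const, lintegral_const]
        _ ≤ (∫⁻ t, cc⁻¹ * ∫⁻ ω, G t ω ∂P ∂μbox) + P SA * V := by
            gcongr
            exact hmark _
        _ = cc⁻¹ * (∫⁻ t, ∫⁻ ω, G t ω ∂P ∂μbox) + P SA * V := by
            rw [lintegral_const_mul' _ _ (ENNReal.inv_ne_top.2 hcc0)]
        _ ≤ cc⁻¹ * (C * ∑ k ∈ Finset.Icc 1 N,
              ∫⁻ ω, ENNReal.ofReal (Z k ω ^ 2) ∂P) + P SA * V := by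
            gcongr
            exact hmaxC Z hZ n
        _ ≤ cc⁻¹ * (C * (2 * ((pidx N : ℝ≥0∞) * ENNReal.ofReal M₀ *
              ∫⁻ v in Set.Ioc (0:ℝ) b, P {ω | v < |Y ω|} * ENNReal.ofReal v)))
            + ((pidx N : ℝ≥0∞) * ENNReal.ofReal M₀ * P {ω | b < |Y ω|}) * V := by
            gcongr
            exact trunc_sum_bound P X Y hX M₀ hb0.le N (fun x hx => hMD x hx N)
    -- coefficient computations
    have hpidx : (pidx N : ℝ≥0∞) = ENNReal.ofReal (nr ^ ((d:ℕ):ℝ)) := by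
      have h1 : pidx N = (n:ℕ)^d := by
        simp [pidx, hN, Finset.prod_const, Finset.card_univ]
      have h2 : (((n:ℕ)^d : ℕ) : ℝ) = nr ^ d := by
        rw [hnr]; push_cast; ring
      rw [h1, Real.rpow_natCast, ← ENNReal.ofReal_natCast ((n:ℕ)^d), h2]
    have hccinv : cc⁻¹ = (ENNReal.ofReal (ε^2))⁻¹ * ENNReal.ofReal (nr ^ (-(2*β))) := by
      have hb2 : (ε * b)^2 = ε^2 * nr ^ (2*β) := by
        rw [hb, mul_pow, sq (nr ^ β), ← Real.rpow_add hnr0]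
        ring_nf
      rw [hcc, hb2, ENNReal.ofReal_mul (sq_nonneg ε),
        ENNReal.mul_inv (Or.inl ?_) (Or.inl ENNReal.ofReal_ne_top)]
      · congr 1
        rw [Real.rpow_neg hnr0.le, ENNReal.ofReal_inv_of_pos (Real.rpow_pos_of_pos hnr0 _)]
      · simp only [ne_eq, ENNReal.ofReal_eq_zero, not_le]
        positivity
    have hmain1 : ENNReal.ofReal (nr ^ δ) * cc⁻¹ * (pidx N : ℝ≥0∞)
        = (ENNReal.ofReal (ε^2))⁻¹ * ENNReal.ofReal (nr ^ (γ - 1)) := by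
      rw [hccinv, hpidx]
      have e : ENNReal.ofReal (nr ^ δ) * ENNReal.ofReal (nr ^ (-(2*β))) *
          ENNReal.ofReal (nr ^ ((d:ℕ):ℝ)) = ENNReal.ofReal (nr ^ (γ - 1)) := by
        rw [← ENNReal.ofReal_mul (Real.rpow_nonneg hnr0.le _), ← Real.rpow_add hnr0,
          ← ENNReal.ofReal_mul (Real.rpow_nonneg hnr0.le _), ← Real.rpow_add hnr0]
        congr 1
        rw [hδdef, hβdef, hγdef, hβdef]
        push_cast
        field_simp
        ring
      calc ENNReal.ofReal (nr ^ δ) *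
            ((ENNReal.ofReal (ε^2))⁻¹ * ENNReal.ofReal (nr ^ (-(2*β)))) *
            ENNReal.ofReal (nr ^ ((d:ℕ):ℝ))
          = (ENNReal.ofReal (ε^2))⁻¹ * (ENNReal.ofReal (nr ^ δ) *
              ENNReal.ofReal (nr ^ (-(2*β))) * ENNReal.ofReal (nr ^ ((d:ℕ):ℝ))) := by ring
        _ = (ENNReal.ofReal (ε^2))⁻¹ * ENNReal.ofReal (nr ^ (γ - 1)) := by rw [e]
    have hmain2 : ENNReal.ofReal (nr ^ δ) * (pidx N : ℝ≥0∞)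
        = ENNReal.ofReal (nr ^ (β * p - 1)) := by
      rw [hpidx, ← ENNReal.ofReal_mul (Real.rpow_nonneg hnr0.le _), ← Real.rpow_add hnr0]
      congr 1
      rw [hδdef, hβdef]
      push_cast
      field_simp
      ring
    calc ENNReal.ofReal (nr ^ δ) *
          ∫⁻ t, P {ω : Ω | ∃ m : ℕ+, m ≤ n ∧
            ε * nr ^ β < ‖dft X (fun _ : Fin d => m) t ω‖} ∂μbox
        ≤ ENNReal.ofReal (nr ^ δ) *
            (cc⁻¹ * (C * (2 * ((pidx N : ℝ≥0∞) * ENNReal.ofReal M₀ *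
              ∫⁻ v in Set.Ioc (0:ℝ) b, P {ω | v < |Y ω|} * ENNReal.ofReal v)))
            + ((pidx N : ℝ≥0∞) * ENNReal.ofReal M₀ * P {ω | b < |Y ω|}) * V) := mul_le_mul_right hint _
      _ = (ENNReal.ofReal (nr ^ δ) * cc⁻¹ * (pidx N : ℝ≥0∞)) *
            (C * (2 * (ENNReal.ofReal M₀ * ∫⁻ v in Set.Ioc (0:ℝ) b, P {ω | v < |Y ω|} * ENNReal.ofReal v)))
          + (ENNReal.ofReal (nr ^ δ) * (pidx N : ℝ≥0∞)) *
            (ENNReal.ofReal M₀ * P {ω | b < |Y ω|} * V) := by ring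
      _ = c1 * (ENNReal.ofReal (nr ^ (γ - 1)) *
            ∫⁻ v in Set.Ioc (0:ℝ) b, P {ω | v < |Y ω|} * ENNReal.ofReal v)
          + c2 * (ENNReal.ofReal (nr ^ (β * p - 1)) * P {ω | b < |Y ω|}) := by
          rw [hmain1, hmain2, hc1, hc2]
          ring
  -- final assembly
  have hS1 := S1_bound P Y (β := β) (p := p) hβ hp1 ?hα
  case hα =>
    have hd1 : (1:ℝ) ≤ (d:ℝ) := by exact_mod_cast hd
    rw [hβdef, div_mul_eq_mul_div, le_div_iff₀ hr0]
    nlinarith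
  have hS2 := S2_bound P Y (β := β) (p := p) hβ hp1 hp2
  rw [← hγdef] at hS2
  have hFmeas : Measurable fun t : Fin d → ℝ => ∑' n : ℕ+,
      ENNReal.ofReal (((n : ℕ) : ℝ) ^ δ) *
        P {ω : Ω | ∃ m : ℕ+, m ≤ n ∧
          ε * ((n : ℕ) : ℝ) ^ β < ‖dft X (fun _ : Fin d => m) t ω‖} :=
    Measurable.ennreal_tsum fun n => (event_measurable P X hX n _).const_mul _
  have hbound : (∫⁻ t, ∑' n : ℕ+,
      ENNReal.ofReal (((n : ℕ) : ℝ) ^ δ) *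
        P {ω : Ω | ∃ m : ℕ+, m ≤ n ∧
          ε * ((n : ℕ) : ℝ) ^ β < ‖dft X (fun _ : Fin d => m) t ω‖} ∂μbox) < ∞ := by
    rw [lintegral_tsum fun n => ((event_measurable P X hX n _).const_mul _).aemeasurable]
    have heq : ∀ n : ℕ+, (∫⁻ t, ENNReal.ofReal (((n : ℕ) : ℝ) ^ δ) *
        P {ω : Ω | ∃ m : ℕ+, m ≤ n ∧
          ε * ((n : ℕ) : ℝ) ^ β < ‖dft X (fun _ : Fin d => m) t ω‖} ∂μbox)
        = ENNReal.ofReal (((n : ℕ) : ℝ) ^ δ) *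
          ∫⁻ t, P {ω : Ω | ∃ m : ℕ+, m ≤ n ∧
            ε * ((n : ℕ) : ℝ) ^ β < ‖dft X (fun _ : Fin d => m) t ω‖} ∂μbox :=
      fun n => lintegral_const_mul' _ _ ENNReal.ofReal_ne_top
    calc ∑' n : ℕ+, (∫⁻ t, ENNReal.ofReal (((n : ℕ) : ℝ) ^ δ) *
          P {ω : Ω | ∃ m : ℕ+, m ≤ n ∧
            ε * ((n : ℕ) : ℝ) ^ β < ‖dft X (fun _ : Fin d => m) t ω‖} ∂μbox)
        ≤ ∑' n : ℕ+, (c1 * (ENNReal.ofReal (((n : ℕ) : ℝ) ^ (γ - 1)) *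
              ∫⁻ v in Set.Ioc (0:ℝ) (((n : ℕ) : ℝ) ^ β),
                P {ω | v < |Y ω|} * ENNReal.ofReal v)
            + c2 * (ENNReal.ofReal (((n : ℕ) : ℝ) ^ (β * p - 1)) *
              P {ω | ((n : ℕ) : ℝ) ^ β < |Y ω|})) := by
          apply Summable.tsum_le_tsum _ ENNReal.summable ENNReal.summable
          intro n
          rw [heq n]
          exact key n
      _ = c1 * ∑' n : ℕ+, (ENNReal.ofReal (((n : ℕ) : ℝ) ^ (γ - 1)) *
              ∫⁻ v in Set.Ioc (0:ℝ) (((n : ℕ) : ℝ) ^ β),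
                P {ω | v < |Y ω|} * ENNReal.ofReal v)
          + c2 * ∑' n : ℕ+, (ENNReal.ofReal (((n : ℕ) : ℝ) ^ (β * p - 1)) *
              P {ω | ((n : ℕ) : ℝ) ^ β < |Y ω|}) := by
          rw [ENNReal.tsum_add, ENNReal.tsum_mul_left, ENNReal.tsum_mul_left]
      _ ≤ c1 * (ENNReal.ofReal (1 + 1 / (-γ)) *
            ∫⁻ v in Set.Ioi (0:ℝ), P {ω | v < |Y ω|} * ENNReal.ofReal (v ^ (p - 1)))
          + c2 * (ENNReal.ofReal p *
            ∫⁻ v in Set.Ioi (0:ℝ), P {ω | v < |Y ω|} * ENNReal.ofReal (v ^ (p - 1))) := by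
          gcongr
          all_goals first | exact hS2 | exact hS1
      _ < ∞ := by
          have hc1fin : c1 < ∞ := by
            rw [hc1]
            apply ENNReal.mul_lt_top (ENNReal.mul_lt_top (ENNReal.mul_lt_top hC (by norm_num))
              (ENNReal.inv_lt_top.2 (by simp [ENNReal.ofReal_pos]; positivity)))
              ENNReal.ofReal_lt_top
          have hc2fin : c2 < ∞ := ENNReal.mul_lt_top ENNReal.ofReal_lt_top hVfin
          apply ENNReal.add_lt_top.2
          constructor
          · exact ENNReal.mul_lt_top hc1fin (ENNReal.mul_lt_top ENNReal.ofReal_lt_top hIfin)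
          · exact ENNReal.mul_lt_top hc2fin (ENNReal.mul_lt_top ENNReal.ofReal_lt_top hIfin)
  exact ae_lt_top hFmeas hbound.ne
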